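/- Under the RU-QLP setup, for every i = 1,…,k the principal angles θ_i between the column spaces of Q and U_k satisfy cos θ_i ≥ 1 / √(1 + δ_i^{4q+4} ‖Φ̂2 Φ̂1^†‖_2²) and tan θ_i ≤ δ_i^{2q+2} ‖Φ̂2 Φ̂1^†‖_2. -/

import Mathlib

/-!
`sin θ_i` is the `i`-th smallest singular value of `(I - QQᵀ)U_k`, so by Courant–Fischer it is
enough to show `‖(I - QQᵀ)U_k x‖² ≤ t²/(1+t²) ‖x‖²` for all `x` supported on the first `i + 1`
coordinates, where `t = δ_i^{2q+2} ‖Φ̂₂Φ̂₁^†‖`. The column space of `Q` contains that of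
`A(AᵀA)^qAᵀΦ = U Σ^{2q+2} UᵀΦ`, so the projection residual is at most the distance from `U_k x` to
`α U Σ^{2q+2} UᵀΦ Φ̂₁^† Σ₁^{-(2q+2)} x`. This difference has component `(1 - α) x` along `U_k` and
`-α Σ_⊥^{2q+2} Φ̂₂Φ̂₁^† Σ₁^{-(2q+2)} x` along `U_⊥`, of norm at most `α t ‖x‖`; the choice
`α = 1/(1+t²)` minimises `(1 - α)² + α²t²` and gives the bound, which is equivalent to both
claimed inequalities.
-/

open Matrix MeasureTheory ProbabilityTheory

noncomputable section

/-- Euclidean norm of a vector. -/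
noncomputable def vecNorm {a : ℕ} (v : Fin a → ℝ) : ℝ :=
  Real.sqrt (∑ i, v i ^ 2)

/-- Frobenius norm of a matrix. -/
noncomputable def frobNorm {a b : ℕ} (M : Matrix (Fin a) (Fin b) ℝ) : ℝ :=
  Real.sqrt (∑ i, ∑ j, M i j ^ 2)

/-- Spectral norm (ℓ² operator norm) of a matrix. -/
noncomputable def specNorm {a b : ℕ} (M : Matrix (Fin a) (Fin b) ℝ) : ℝ :=
  ‖LinearMap.toContinuousLinearMap (Matrix.toEuclideanLin M)‖

/-- `mNorm true` is the spectral norm, `mNorm false` is the Frobenius norm. -/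
noncomputable def mNorm (t : Bool) {a b : ℕ} (M : Matrix (Fin a) (Fin b) ℝ) : ℝ :=
  if t then specNorm M else frobNorm M

/-- The `i`-th largest singular value of a matrix (0-indexed, so `sval M 0` is the
largest singular value): the square root of the `i`-th largest eigenvalue of `MᵀM`. -/
noncomputable def sval {a b : ℕ} (M : Matrix (Fin a) (Fin b) ℝ) (i : Fin b) : ℝ :=
  Real.sqrt ((Matrix.isHermitian_conjTranspose_mul_self M).eigenvalues
    (Tuple.sort (Matrix.isHermitian_conjTranspose_mul_self M).eigenvalues i.rev))

/-- The Moore–Penrose pseudoinverse of a full-row-rank matrix. -/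
noncomputable def rowPinv {a b : ℕ} (M : Matrix (Fin a) (Fin b) ℝ) : Matrix (Fin b) (Fin a) ℝ :=
  Mᵀ * (M * Mᵀ)⁻¹

/-- The constant ω = ω₁ω₂, ω₁ = √(m−k) + √(k+p) + 7, ω₂ = 4e√(k+p)/(p+1). -/
noncomputable def omegaConst (m k p : ℕ) : ℝ :=
  (Real.sqrt ((m : ℝ) - (k : ℝ)) + Real.sqrt ((k : ℝ) + (p : ℝ)) + 7) *
    (4 * Real.exp 1 * Real.sqrt ((k : ℝ) + (p : ℝ)) / ((p : ℝ) + 1))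

/-- The constant C = √(k/(p−1)) + e√((m−k)(p+k))/p. -/
noncomputable def CConst (m k p : ℕ) : ℝ :=
  Real.sqrt ((k : ℝ) / ((p : ℝ) - 1)) +
    Real.exp 1 * Real.sqrt (((m : ℝ) - (k : ℝ)) * ((p : ℝ) + (k : ℝ))) / (p : ℝ)

theorem dotProduct_self_nonneg {ι R : Type*} [Fintype ι] [Ring R] [LinearOrder R]
    [IsStrictOrderedRing R] (v : ι → R) : 0 ≤ v ⬝ᵥ v :=
  Finset.sum_nonneg fun i _ => mul_self_nonneg (v i)

theorem dotProduct_self_eq_norm_sq {ι : Type*} [Fintype ι] (v : ι → ℝ) :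
    v ⬝ᵥ v = ‖WithLp.toLp 2 v‖ ^ 2 := by
  rw [← real_inner_self_eq_norm_sq, EuclideanSpace.inner_eq_star_dotProduct]
  rfl

theorem dotProduct_self_mulVec_le_specNorm {a b : ℕ} (M : Matrix (Fin a) (Fin b) ℝ)
    (v : Fin b → ℝ) : (M *ᵥ v) ⬝ᵥ (M *ᵥ v) ≤ specNorm M ^ 2 * (v ⬝ᵥ v) := by
  rw [dotProduct_self_eq_norm_sq, dotProduct_self_eq_norm_sq, ← mul_pow]
  exact pow_le_pow_left₀ (norm_nonneg _)
    ((LinearMap.toContinuousLinearMap (toEuclideanLin M)).le_opNorm (WithLp.toLp 2 v)) 2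

theorem OrthonormalBasis.dotProduct_eq_sum {n : Type*} [Fintype n]
    (b : OrthonormalBasis n ℝ (EuclideanSpace ℝ n)) (x y : n → ℝ) :
    x ⬝ᵥ y = ∑ j, (⇑(b j) ⬝ᵥ x) * (⇑(b j) ⬝ᵥ y) := by
  have h := b.sum_inner_mul_inner (WithLp.toLp 2 x) (WithLp.toLp 2 y)
  simp only [EuclideanSpace.inner_eq_star_dotProduct, star_trivial] at h
  rw [dotProduct_comm, ← h]
  simp only [dotProduct_comm y]

theorem Fin.bijective_sumElim_castLE {k n : ℕ} (hk : k ≤ n) :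
    Function.Bijective
      (Sum.elim (Fin.castLE hk) fun i : Fin (n - k) => (⟨k + i, by omega⟩ : Fin n)) := by
  convert (finSumFinEquiv.trans (finCongr (Nat.add_sub_cancel' hk))).bijective using 1
  ext (i | i) <;> simp

namespace Antitone

variable {ι : Type*} [Preorder ι] {σ : ι → ℝ} {a b : ι}

theorem abs_pow_le (hσ : Antitone σ) (hσ0 : ∀ j, 0 ≤ σ j) (hab : a ≤ b) (r : ℕ) :
    |σ b ^ r| ≤ σ a ^ r := by
  rw [abs_of_nonneg (pow_nonneg (hσ0 b) r)]
  exact pow_le_pow_left₀ (hσ0 b) (hσ hab) r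

theorem abs_pow_inv_le (hσ : Antitone σ) (hb : 0 < σ b) (hab : a ≤ b) (r : ℕ) :
    |(σ a ^ r)⁻¹| ≤ (σ b ^ r)⁻¹ := by
  have ha : 0 < σ a := hb.trans_le (hσ hab)
  rw [abs_of_pos (inv_pos.mpr (pow_pos ha r))]
  exact inv_anti₀ (pow_pos hb r) (pow_le_pow_left₀ hb.le (hσ hab) r)

end Antitone

namespace Matrix

section DotProduct

variable {ι α β κ : Type*} [Fintype ι] [Fintype α] [Fintype β] [Fintype κ]

theorem mulVec_dotProduct_mulVec {R : Type*} [CommSemiring R] (A : Matrix ι α R)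
    (B : Matrix ι β R) (x : α → R) (y : β → R) :
    (A *ᵥ x) ⬝ᵥ (B *ᵥ y) = x ⬝ᵥ (Aᵀ * B) *ᵥ y := by
  rw [dotProduct_comm, dotProduct_mulVec, ← mulVec_transpose, mulVec_mulVec, dotProduct_comm]

theorem dotProduct_self_add_mulVec {R : Type*} [CommRing R] [DecidableEq α] [DecidableEq β]
    {U₁ : Matrix ι α R} {U₂ : Matrix ι β R} (h₁ : U₁ᵀ * U₁ = 1) (h₂ : U₂ᵀ * U₂ = 1)
    (h₁₂ : U₁ᵀ * U₂ = 0) (x : α → R) (y : β → R) :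
    (U₁ *ᵥ x + U₂ *ᵥ y) ⬝ᵥ (U₁ *ᵥ x + U₂ *ᵥ y) = x ⬝ᵥ x + y ⬝ᵥ y := by
  have h₂₁ : U₂ᵀ * U₁ = 0 := by
    rw [← transpose_transpose U₁, ← transpose_mul, h₁₂, transpose_zero]
  simp only [add_dotProduct, dotProduct_add, mulVec_dotProduct_mulVec, h₁, h₂, h₁₂, h₂₁,
    one_mulVec, zero_mulVec, dotProduct_zero]
  ring

theorem dotProduct_self_diagonal_mulVec_le [DecidableEq α] {d x : α → ℝ} {c : ℝ}
    (h : ∀ j, x j ≠ 0 → |d j| ≤ c) :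
    (diagonal d *ᵥ x) ⬝ᵥ (diagonal d *ᵥ x) ≤ c ^ 2 * (x ⬝ᵥ x) := by
  simp only [mulVec_diagonal, dotProduct, Finset.mul_sum]
  refine Finset.sum_le_sum fun j _ => ?_
  rcases eq_or_ne (x j) 0 with hx | hx
  · simp [hx]
  · have := pow_le_pow_left₀ (abs_nonneg _) (h j hx) 2
    rw [sq_abs] at this
    nlinarith [mul_self_nonneg (x j)]

theorem dotProduct_self_one_sub_mul_transpose_mulVec_le [DecidableEq ι] [DecidableEq κ]
    {Q : Matrix ι κ ℝ} (hQ : Qᵀ * Q = 1) (v : ι → ℝ) (y : κ → ℝ) :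
    ((1 - Q * Qᵀ) *ᵥ v) ⬝ᵥ ((1 - Q * Qᵀ) *ᵥ v) ≤ (v - Q *ᵥ y) ⬝ᵥ (v - Q *ᵥ y) := by
  have hPv : (1 - Q * Qᵀ) *ᵥ v = (v - Q *ᵥ y) - Q *ᵥ (Qᵀ *ᵥ (v - Q *ᵥ y)) := by
    simp only [sub_mulVec, one_mulVec, mulVec_sub, mulVec_mulVec, hQ]
    abel
  generalize v - Q *ᵥ y = w at hPv ⊢
  have hQw : (Q *ᵥ (Qᵀ *ᵥ w)) ⬝ᵥ w = (Qᵀ *ᵥ w) ⬝ᵥ (Qᵀ *ᵥ w) := by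
    rw [dotProduct_comm, dotProduct_mulVec, ← mulVec_transpose]
  have hQQw : (Q *ᵥ (Qᵀ *ᵥ w)) ⬝ᵥ (Q *ᵥ (Qᵀ *ᵥ w)) = (Qᵀ *ᵥ w) ⬝ᵥ (Qᵀ *ᵥ w) := by
    rw [mulVec_dotProduct_mulVec, hQ, one_mulVec]
  rw [hPv, sub_dotProduct, dotProduct_sub, dotProduct_sub, dotProduct_comm w (Q *ᵥ _), hQw, hQQw]
  linarith [dotProduct_self_nonneg (Qᵀ *ᵥ w)]

theorem dotProduct_self_one_sub_mul_transpose_mulVec_le_of_range_le {γ : Type*} [Fintype γ]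
    [DecidableEq ι] [DecidableEq α] [DecidableEq β] [DecidableEq κ] {Q : Matrix ι κ ℝ}
    (hQ : Qᵀ * Q = 1) {U₁ : Matrix ι α ℝ} {U₂ : Matrix ι β ℝ} (h₁ : U₁ᵀ * U₁ = 1)
    (h₂ : U₂ᵀ * U₂ = 1) (h₁₂ : U₁ᵀ * U₂ = 0) {d₁ : α → ℝ} {d₂ : β → ℝ} (hd₁ : ∀ j, d₁ j ≠ 0)
    {Φ₁ : Matrix α γ ℝ} {Φ₂ : Matrix β γ ℝ} {G : Matrix γ α ℝ} (hG : Φ₁ * G = 1)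
    (hrange : LinearMap.range (U₁ * diagonal d₁ * Φ₁ + U₂ * diagonal d₂ * Φ₂).mulVecLin ≤
      LinearMap.range Q.mulVecLin)
    {x : α → ℝ} {t : ℝ}
    (hgain : (diagonal d₂ *ᵥ (Φ₂ * G) *ᵥ diagonal d₁⁻¹ *ᵥ x) ⬝ᵥ
      (diagonal d₂ *ᵥ (Φ₂ * G) *ᵥ diagonal d₁⁻¹ *ᵥ x) ≤ t ^ 2 * (x ⬝ᵥ x)) :
    ((1 - Q * Qᵀ) *ᵥ U₁ *ᵥ x) ⬝ᵥ ((1 - Q * Qᵀ) *ᵥ U₁ *ᵥ x) ≤ t ^ 2 / (1 + t ^ 2) * (x ⬝ᵥ x) := by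
  set a : ℝ := 1 / (1 + t ^ 2)
  set w := diagonal d₁⁻¹ *ᵥ x
  set z := diagonal d₂ *ᵥ (Φ₂ * G) *ᵥ w
  have hw : diagonal d₁ *ᵥ Φ₁ *ᵥ G *ᵥ w = x := by
    have hd : (fun j => d₁ j * d₁⁻¹ j) = 1 := funext fun j => mul_inv_cancel₀ (hd₁ j)
    rw [mulVec_mulVec _ Φ₁ G, hG, one_mulVec, mulVec_mulVec, diagonal_mul_diagonal, hd,
      Pi.one_def, diagonal_one, one_mulVec]
  obtain ⟨y, hy⟩ := hrange ⟨a • G *ᵥ w, rfl⟩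
  have hQy : Q *ᵥ y = a • (U₁ *ᵥ x + U₂ *ᵥ z) := by
    simp only [mulVecLin_apply, add_mulVec, ← mulVec_mulVec, mulVec_smul] at hy
    rw [hy, ← hw]
    simp only [z, ← mulVec_mulVec]
  have hres : U₁ *ᵥ x - Q *ᵥ y = U₁ *ᵥ ((1 - a) • x) + U₂ *ᵥ (-(a • z)) := by
    rw [hQy, mulVec_smul, mulVec_neg, mulVec_smul]
    module
  calc ((1 - Q * Qᵀ) *ᵥ U₁ *ᵥ x) ⬝ᵥ ((1 - Q * Qᵀ) *ᵥ U₁ *ᵥ x)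
      ≤ (U₁ *ᵥ x - Q *ᵥ y) ⬝ᵥ (U₁ *ᵥ x - Q *ᵥ y) :=
        dotProduct_self_one_sub_mul_transpose_mulVec_le hQ _ y
    _ = (1 - a) ^ 2 * (x ⬝ᵥ x) + a ^ 2 * (z ⬝ᵥ z) := by
        rw [hres, dotProduct_self_add_mulVec h₁ h₂ h₁₂]
        simp only [smul_dotProduct, dotProduct_smul, neg_dotProduct, dotProduct_neg, smul_eq_mul]
        ring
    _ ≤ ((1 - a) ^ 2 + a ^ 2 * t ^ 2) * (x ⬝ᵥ x) := by
        nlinarith [sq_nonneg a]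
    _ = t ^ 2 / (1 + t ^ 2) * (x ⬝ᵥ x) := by
        congr 1
        simp only [a]
        field_simp
        ring

end DotProduct

theorem dotProduct_self_diagonal_mulVec_mulVec_diagonal_mulVec_le {a b : ℕ}
    (F : Matrix (Fin a) (Fin b) ℝ) {d₁ x : Fin b → ℝ} {d₂ : Fin a → ℝ} {c₁ c₂ : ℝ}
    (h₁ : ∀ j, x j ≠ 0 → |d₁ j| ≤ c₁) (h₂ : ∀ j, |d₂ j| ≤ c₂) :
    (diagonal d₂ *ᵥ F *ᵥ diagonal d₁ *ᵥ x) ⬝ᵥ (diagonal d₂ *ᵥ F *ᵥ diagonal d₁ *ᵥ x) ≤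
      (c₂ * specNorm F * c₁) ^ 2 * (x ⬝ᵥ x) :=
  calc _ ≤ c₂ ^ 2 * ((F *ᵥ diagonal d₁ *ᵥ x) ⬝ᵥ (F *ᵥ diagonal d₁ *ᵥ x)) :=
        dotProduct_self_diagonal_mulVec_le fun j _ => h₂ j
    _ ≤ c₂ ^ 2 * (specNorm F ^ 2 * ((diagonal d₁ *ᵥ x) ⬝ᵥ (diagonal d₁ *ᵥ x))) := by
        gcongr
        exact dotProduct_self_mulVec_le_specNorm F _
    _ ≤ c₂ ^ 2 * (specNorm F ^ 2 * (c₁ ^ 2 * (x ⬝ᵥ x))) := by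
        gcongr
        exact dotProduct_self_diagonal_mulVec_le h₁
    _ = (c₂ * specNorm F * c₁) ^ 2 * (x ⬝ᵥ x) := by ring

theorem mul_rowPinv_of_rank_eq {a b : ℕ} {M : Matrix (Fin a) (Fin b) ℝ} (h : M.rank = a) :
    M * rowPinv M = 1 := by
  have hrank : (M * Mᵀ).rank = a := by rw [rank_self_mul_transpose, h]
  have hunit : IsUnit (M * Mᵀ) := by
    refine mulVec_surjective_iff_isUnit.mp
      ((LinearMap.range_eq_top (f := (M * Mᵀ).mulVecLin)).mp ?_)
    exact Submodule.eq_top_of_finrank_eq (by rw [← rank, hrank, Module.finrank_fin_fun])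
  rw [rowPinv, ← Matrix.mul_assoc, mul_nonsing_inv _ ((isUnit_iff_isUnit_det _).mp hunit)]

theorem range_mulVecLin_mul_le {l m n p r R : Type*} [Fintype m] [Fintype n] [Fintype p]
    [Fintype r] [CommSemiring R] {A : Matrix l m R} {G : Matrix m n R} {P : Matrix m p R}
    {Q : Matrix l r R} {S : Matrix r p R}
    (hP : LinearMap.range P.mulVecLin = LinearMap.range G.mulVecLin)
    (hAP : A * P = Q * S) :
    LinearMap.range (A * G).mulVecLin ≤ LinearMap.range Q.mulVecLin := by
  rw [mulVecLin_mul, LinearMap.range_comp, ← hP, ← LinearMap.range_comp, ← mulVecLin_mul, hAP,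
    mulVecLin_mul]
  exact LinearMap.range_comp_le_range _ _

section Submatrix

variable {ι α β n R : Type*} [Fintype ι] [CommSemiring R]

theorem transpose_submatrix_mul_submatrix (U : Matrix ι n R) (f : α → n) (g : β → n) :
    (U.submatrix id f)ᵀ * U.submatrix id g = (Uᵀ * U).submatrix f g := by
  rw [transpose_submatrix, submatrix_mul _ _ _ id _ Function.bijective_id]

theorem transpose_submatrix_mul_submatrix_self [DecidableEq n] [DecidableEq α]
    {U : Matrix ι n R} (hU : Uᵀ * U = 1) {f : α → n} (hf : Function.Injective f) :
    (U.submatrix id f)ᵀ * U.submatrix id f = 1 := by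
  rw [transpose_submatrix_mul_submatrix, hU, submatrix_one f hf]

theorem transpose_submatrix_mul_submatrix_eq_zero [DecidableEq n] {U : Matrix ι n R}
    (hU : Uᵀ * U = 1) {f : α → n} {g : β → n} (hfg : ∀ a b, f a ≠ g b) :
    (U.submatrix id f)ᵀ * U.submatrix id g = 0 := by
  rw [transpose_submatrix_mul_submatrix, hU]
  ext a b
  exact one_apply_ne (hfg a b)

end Submatrix

theorem mul_diagonal_mul_transpose_eq_add {ι α β n R : Type*} [Fintype α] [Fintype β]
    [Fintype n] [DecidableEq n] [DecidableEq α] [DecidableEq β] [CommSemiring R]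
    (e : α ⊕ β ≃ n) (U : Matrix ι n R) (d : n → R) :
    U * diagonal d * Uᵀ =
      U.submatrix id (e ∘ Sum.inl) * diagonal (d ∘ e ∘ Sum.inl) *
          (U.submatrix id (e ∘ Sum.inl))ᵀ +
        U.submatrix id (e ∘ Sum.inr) * diagonal (d ∘ e ∘ Sum.inr) *
          (U.submatrix id (e ∘ Sum.inr))ᵀ := by
  ext a b
  rw [add_apply, mul_apply, mul_apply, mul_apply]
  simp only [mul_diagonal, transpose_apply, submatrix_apply, id, Function.comp_apply]
  rw [← e.sum_comp, Fintype.sum_sum_type]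

theorem mul_pow_transpose_mul_self_mul_transpose {m n R : Type*} [Fintype m] [Fintype n]
    [DecidableEq n] [CommRing R] {A U : Matrix m n R} {V : Matrix n n R} {σ : n → R}
    (hU : Uᵀ * U = 1) (hV : Vᵀ * V = 1) (hA : A = U * diagonal σ * Vᵀ) (q : ℕ) :
    A * ((Aᵀ * A) ^ q * Aᵀ) = U * diagonal (fun j => σ j ^ (2 * q + 2)) * Uᵀ := by
  let V' : (Matrix n n R)ˣ := ⟨V, Vᵀ, mul_eq_one_comm.mp hV, hV⟩
  have hAtA : Aᵀ * A = V * diagonal (σ ^ 2) * Vᵀ := by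
    rw [hA]
    simp only [transpose_mul, transpose_transpose, diagonal_transpose, Matrix.mul_assoc]
    rw [← Matrix.mul_assoc Uᵀ, hU, Matrix.one_mul, ← Matrix.mul_assoc (diagonal σ),
      diagonal_mul_diagonal, sq]
    rfl
  have hpow : (Aᵀ * A) ^ q = V * diagonal (σ ^ (2 * q)) * Vᵀ := by
    rw [hAtA, pow_mul, ← diagonal_pow (σ ^ 2) q]
    exact Units.conj_pow V' _ q
  rw [hpow, hA]
  simp only [transpose_mul, transpose_transpose, diagonal_transpose, Matrix.mul_assoc]
  rw [← Matrix.mul_assoc Vᵀ V, hV, Matrix.one_mul, ← Matrix.mul_assoc Vᵀ V, hV, Matrix.one_mul,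
    ← Matrix.mul_assoc (diagonal _) (diagonal _), diagonal_mul_diagonal,
    ← Matrix.mul_assoc (diagonal _) (diagonal _), diagonal_mul_diagonal]
  congr 3
  funext j
  simp only [Pi.pow_apply]
  ring

namespace IsHermitian

theorem dotProduct_mulVec_eq_sum {n : Type*} [Fintype n] [DecidableEq n] {H : Matrix n n ℝ}
    (hH : H.IsHermitian) (x : n → ℝ) :
    x ⬝ᵥ H *ᵥ x = ∑ j, hH.eigenvalues j * (⇑(hH.eigenvectorBasis j) ⬝ᵥ x) ^ 2 := by
  rw [hH.eigenvectorBasis.dotProduct_eq_sum]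
  refine Finset.sum_congr rfl fun j _ => ?_
  rw [dotProduct_mulVec, ← mulVec_transpose, ← conjTranspose_eq_transpose_of_trivial, hH.eq,
    hH.mulVec_eigenvectorBasis, smul_dotProduct, smul_eq_mul]
  ring

theorem eigenvalues_sort_le {N : ℕ} {H : Matrix (Fin N) (Fin N) ℝ} (hH : H.IsHermitian)
    {i : Fin N} {c : ℝ} {W : Submodule ℝ (Fin N → ℝ)} (hW : (i : ℕ) < Module.finrank ℝ W)
    (h : ∀ x ∈ W, x ⬝ᵥ H *ᵥ x ≤ c * (x ⬝ᵥ x)) :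
    hH.eigenvalues (Tuple.sort hH.eigenvalues i) ≤ c := by
  set τ := Tuple.sort hH.eigenvalues
  set b := hH.eigenvectorBasis
  -- a nonzero `x ∈ W` orthogonal to the eigenvectors of the `i` smallest eigenvalues
  let C : Matrix (Fin i) (Fin N) ℝ := fun j => ⇑(b (τ (Fin.castLE i.2.le j)))
  obtain ⟨x, hxW, hCx, hx0⟩ : ∃ x ∈ W, C *ᵥ x = 0 ∧ x ≠ 0 := by
    obtain ⟨⟨x, hxW⟩, hx, hx0⟩ := Submodule.exists_mem_ne_zero_of_ne_bot
      (LinearMap.ker_ne_bot_of_finrank_lt (f := C.mulVecLin ∘ₗ W.subtype) (by simpa using hW))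
    exact ⟨x, hxW, hx, by simpa using hx0⟩
  let y j := ⇑(b j) ⬝ᵥ x
  have hlow : hH.eigenvalues (τ i) * (x ⬝ᵥ x) ≤ x ⬝ᵥ H *ᵥ x :=
    calc hH.eigenvalues (τ i) * (x ⬝ᵥ x) = ∑ j, hH.eigenvalues (τ i) * y (τ j) ^ 2 := by
          rw [b.dotProduct_eq_sum, Finset.mul_sum, ← Equiv.sum_comp τ]
          simp only [y, sq]
      _ ≤ ∑ j, hH.eigenvalues (τ j) * y (τ j) ^ 2 := by
          refine Finset.sum_le_sum fun j _ => ?_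
          rcases lt_or_ge j i with hji | hij
          · simp [y, show ⇑(b (τ j)) ⬝ᵥ x = 0 from congrFun hCx ⟨j, hji⟩]
          · exact mul_le_mul_of_nonneg_right (Tuple.monotone_sort hH.eigenvalues hij) (sq_nonneg _)
      _ = x ⬝ᵥ H *ᵥ x := by
          rw [Equiv.sum_comp τ fun j => hH.eigenvalues j * y j ^ 2, hH.dotProduct_mulVec_eq_sum]
  have hpos : 0 < x ⬝ᵥ x :=
    (dotProduct_self_nonneg x).lt_of_ne (Ne.symm (mt dotProduct_self_eq_zero.mp hx0))
  exact le_of_mul_le_mul_right (hlow.trans (h x hxW)) hpos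

end IsHermitian

end Matrix

theorem sq_sval_rev_le {a b : ℕ} (M : Matrix (Fin a) (Fin b) ℝ) (i : Fin b) {c : ℝ}
    (h : ∀ x : Fin b → ℝ, (∀ j, x j ≠ 0 → j ≤ i) → (M *ᵥ x) ⬝ᵥ (M *ᵥ x) ≤ c * (x ⬝ᵥ x)) :
    sval M i.rev ^ 2 ≤ c := by
  have hH := isHermitian_conjTranspose_mul_self M
  rw [sval, Fin.rev_rev,
    Real.sq_sqrt ((posSemidef_conjTranspose_mul_self M).eigenvalues_nonneg _)]
  -- `LinearMap.range E` is the span of the first `i + 1` coordinate vectors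
  let E := Function.ExtendByZero.linearMap ℝ (Fin.castLE i.isLt)
  refine hH.eigenvalues_sort_le (W := LinearMap.range E) ?_ ?_
  · rw [LinearMap.finrank_range_of_inj (Function.extend_injective (Fin.castLE_injective _) 0)]
    simp
  · rintro _ ⟨y, rfl⟩
    rw [conjTranspose_eq_transpose_of_trivial, ← mulVec_dotProduct_mulVec]
    refine h _ fun j hj => ?_
    by_contra hij
    refine hj (Function.extend_apply' _ _ _ ?_)
    rintro ⟨l, rfl⟩
    exact hij (Fin.le_def.mpr (Nat.le_of_lt_succ l.isLt))

namespace Real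

theorem one_div_sqrt_one_add_sq_le_cos_arcsin {s t : ℝ} (h : s ^ 2 ≤ t ^ 2 / (1 + t ^ 2)) :
    1 / √(1 + t ^ 2) ≤ cos (arcsin s) := by
  have ht : 0 < 1 + t ^ 2 := by positivity
  rw [le_div_iff₀ ht] at h
  rw [cos_arcsin, one_div, ← sqrt_inv]
  refine sqrt_le_sqrt ((inv_le_iff_one_le_mul₀ ht).mpr ?_)
  nlinarith

theorem tan_arcsin_le {s t : ℝ} (ht : 0 ≤ t) (h : s ^ 2 ≤ t ^ 2 / (1 + t ^ 2)) :
    tan (arcsin s) ≤ t := by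
  rw [le_div_iff₀ (by positivity)] at h
  have hs : 0 < 1 - s ^ 2 := by nlinarith
  rw [tan_arcsin, div_le_iff₀ (sqrt_pos.mpr hs)]
  calc s ≤ √(s ^ 2) := by rw [sqrt_sq_eq_abs]; exact le_abs_self s
    _ ≤ √(t ^ 2 * (1 - s ^ 2)) := sqrt_le_sqrt (by nlinarith)
    _ = t * √(1 - s ^ 2) := by rw [sqrt_mul (sq_nonneg t), sqrt_sq ht]

end Real

theorem ruqlp_cos_tan_theta_bound
    (m n k q : ℕ) (hkn : k < n)
    (d : ℕ)
    (A U : Matrix (Fin m) (Fin n) ℝ) (V : Matrix (Fin n) (Fin n) ℝ) (σ : Fin n → ℝ)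
    (hU : Uᵀ * U = 1) (hV : Vᵀ * V = 1)
    (hσ : Antitone σ) (hσ0 : ∀ i, 0 ≤ σ i)
    (hA : A = U * Matrix.diagonal σ * Vᵀ)
    (hgap : σ ⟨k, hkn⟩ < σ ⟨k - 1, by omega⟩)
    (Φ : Matrix (Fin m) (Fin d) ℝ)
    (Uk : Matrix (Fin m) (Fin k) ℝ) (hUk : Uk = U.submatrix id (Fin.castLE hkn.le))
    (Uperp : Matrix (Fin m) (Fin (n - k)) ℝ)
    (hUperp : Uperp = U.submatrix id fun i => ⟨k + i.1, by have := i.2; omega⟩)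
    (Φ1 : Matrix (Fin k) (Fin d) ℝ) (hΦ1 : Φ1 = Ukᵀ * Φ)
    (Φ2 : Matrix (Fin (n - k)) (Fin d) ℝ) (hΦ2 : Φ2 = Uperpᵀ * Φ)
    (hrank : Φ1.rank = k)
    (Pbar : Matrix (Fin n) (Fin d) ℝ)
    (hPrange : LinearMap.range (Matrix.mulVecLin Pbar)
      = LinearMap.range (Matrix.mulVecLin ((Aᵀ * A) ^ q * Aᵀ * Φ)))
    (Q : Matrix (Fin m) (Fin d) ℝ) (R : Matrix (Fin d) (Fin d) ℝ)
    (hQ : Qᵀ * Q = 1) (hQR : A * Pbar = Q * R)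
    :
    ∀ i : Fin k,
      1 / Real.sqrt (1 + (σ ⟨k, hkn⟩ / σ (Fin.castLE hkn.le i)) ^ (4 * q + 4) * specNorm (Φ2 * rowPinv Φ1) ^ 2) ≤
          Real.cos (Real.arcsin (sval ((1 - Q * Qᵀ) * Uk) i.rev)) ∧
        Real.tan (Real.arcsin (sval ((1 - Q * Qᵀ) * Uk) i.rev)) ≤
          (σ ⟨k, hkn⟩ / σ (Fin.castLE hkn.le i)) ^ (2 * q + 2) * specNorm (Φ2 * rowPinv Φ1) := by
  intro i
  subst hUk hUperp
  let e := Equiv.ofBijective _ (Fin.bijective_sumElim_castLE hkn.le)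
  have hσ_pos : ∀ j : Fin k, 0 < σ (Fin.castLE hkn.le j) := fun j =>
    (hσ0 _).trans_lt (hgap.trans_le (hσ (Fin.mk_le_mk.mpr (by have := j.isLt; omega))))
  set t := (σ ⟨k, hkn⟩ / σ (Fin.castLE hkn.le i)) ^ (2 * q + 2) * specNorm (Φ2 * rowPinv Φ1)
  have hB : A * ((Aᵀ * A) ^ q * Aᵀ * Φ) =
      U.submatrix id (e ∘ .inl) * Matrix.diagonal (fun j => σ (e (.inl j)) ^ (2 * q + 2)) * Φ1 +
        U.submatrix id (e ∘ .inr) * Matrix.diagonal (fun j => σ (e (.inr j)) ^ (2 * q + 2)) *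
          Φ2 := by
    rw [hΦ1, hΦ2, ← Matrix.mul_assoc, Matrix.mul_pow_transpose_mul_self_mul_transpose hU hV hA,
      Matrix.mul_diagonal_mul_transpose_eq_add e, Matrix.add_mul]
    simp only [Matrix.mul_assoc]
    rfl
  have hs : sval ((1 - Q * Qᵀ) * U.submatrix id (Fin.castLE hkn.le)) i.rev ^ 2 ≤
      t ^ 2 / (1 + t ^ 2) := by
    refine sq_sval_rev_le _ i fun x hx => ?_
    rw [← Matrix.mulVec_mulVec]
    exact Matrix.dotProduct_self_one_sub_mul_transpose_mulVec_le_of_range_le hQ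
      (Matrix.transpose_submatrix_mul_submatrix_self hU (e.injective.comp Sum.inl_injective))
      (Matrix.transpose_submatrix_mul_submatrix_self hU (e.injective.comp Sum.inr_injective))
      (Matrix.transpose_submatrix_mul_submatrix_eq_zero hU fun a b => e.injective.ne Sum.inl_ne_inr)
      (fun j => (pow_pos (hσ_pos j) _).ne') (Matrix.mul_rowPinv_of_rank_eq hrank)
      (hB ▸ Matrix.range_mulVecLin_mul_le hPrange hQR)
      ((Matrix.dotProduct_self_diagonal_mulVec_mulVec_diagonal_mulVec_le _
        (fun j hj => hσ.abs_pow_inv_le (hσ_pos i) (hx j hj) _)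
        fun j => hσ.abs_pow_le hσ0 (a := ⟨k, hkn⟩) (Fin.le_def.mpr (Nat.le_add_right k j)) _
        ).trans_eq (by simp only [t, div_pow]; ring))
  have ht : 0 ≤ t := mul_nonneg (pow_nonneg (div_nonneg (hσ0 _) (hσ0 _)) _) (norm_nonneg _)
  rw [show (σ ⟨k, hkn⟩ / σ (Fin.castLE hkn.le i)) ^ (4 * q + 4) * specNorm (Φ2 * rowPinv Φ1) ^ 2
    = t ^ 2 by ring]
  exact ⟨Real.one_div_sqrt_one_add_sq_le_cos_arcsin hs, Real.tan_arcsin_le ht hs⟩
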